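/- Let λ be a real number. For every natural number n and every real x, one has (x+1)_{n,λ} = Σ_{l=0}^{n} C(n,l) β_{l,λ}(x) · M_{n-l+1,λ}/(n-l+1), where M_{m,λ} = (2)_{m,λ} - (1)_{m,λ} are the dimorphic Mersenne numbers. -/

import Mathlib

/-- The degenerate falling factorial `(x)_{n,λ} = x (x - λ) (x - 2λ) ⋯ (x - (n-1)λ)`,
with `(x)_{0,λ} = 1`. -/
def degFallingFactorial (lam x : ℝ) (n : ℕ) : ℝ :=
  ∏ i ∈ Finset.range n, (x - i * lam)

/-- The degenerate exponential `e_λ^x(t) = ∑_{n=0}^∞ (x)_{n,λ} t^n/n!` as a formal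
power series in `ℝ[[t]]`. -/
noncomputable def degExpSeries (lam x : ℝ) : PowerSeries ℝ :=
  PowerSeries.mk fun n => degFallingFactorial lam x n / (n.factorial : ℝ)

/-- The formal power series `(e_λ(t) - 1)/t`, whose constant term is `1`. -/
noncomputable def degExpSubOneDivT (lam : ℝ) : PowerSeries ℝ :=
  PowerSeries.mk fun n => degFallingFactorial lam 1 (n + 1) / ((n + 1).factorial : ℝ)

/-- The generating series `(t/(e_λ(t)-1)) ⬝ e_λ^x(t) = ∑_{n=0}^∞ β_{n,λ}(x) t^n/n!` of the
degenerate Bernoulli polynomials, where `t/(e_λ(t)-1)` denotes the multiplicative inverse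
of the series `(e_λ(t)-1)/t`. -/
noncomputable def degBernoulliSeries (lam x : ℝ) : PowerSeries ℝ :=
  (degExpSubOneDivT lam)⁻¹ * degExpSeries lam x

/-- The degenerate Bernoulli polynomial `β_{n,λ}(x)`, read off from its generating series. -/
noncomputable def degBernoulli (lam x : ℝ) (n : ℕ) : ℝ :=
  (n.factorial : ℝ) * PowerSeries.coeff n (degBernoulliSeries lam x)

/-- The dimorphic Mersenne number `M_{n,λ} = (2)_{n,λ} - (1)_{n,λ}`. -/
def dimorphicMersenne (lam : ℝ) (n : ℕ) : ℝ :=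
  degFallingFactorial lam 2 n - degFallingFactorial lam 1 n

/-!
The degenerate falling factorials are of binomial type,
`(x + y)_{n,λ} = ∑ C(n,k) (x)_{k,λ} (y)_{n-k,λ}`, i.e. `e_λ^x(t) e_λ^y(t) = e_λ^{x+y}(t)`.
The exponential generating function of `M_{m+1,λ}/(m+1)` is `(e_λ^2(t) - e_λ(t))/t`, which is
therefore `((e_λ(t) - 1)/t) ⬝ e_λ(t)`; multiplying it by the Bernoulli series `e_λ^x(t) t/(e_λ(t)-1)`
gives `e_λ^{x+1}(t)`, and the theorem is the coefficient of `t^n/n!` in this identity.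
-/

open Finset PowerSeries

section ExponentialGeneratingFunction

variable {K : Type*} [Field K]

noncomputable def egf (a : ℕ → K) : PowerSeries K :=
  mk fun n => a n / n.factorial

lemma coeff_egf (a : ℕ → K) (n : ℕ) : coeff n (egf a) = a n / n.factorial := coeff_mk _ _

variable [CharZero K]

lemma egf_injective : Function.Injective (egf : (ℕ → K) → PowerSeries K) := by
  intro a b h
  funext n
  have hn := congrArg (coeff n) h
  rwa [coeff_egf, coeff_egf, div_left_inj' (Nat.cast_ne_zero.mpr n.factorial_ne_zero)] at hn

lemma egf_mul (a b : ℕ → K) :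
    egf a * egf b =
      egf fun n => ∑ ij ∈ antidiagonal n, (n.choose ij.1 : K) * (a ij.1 * b ij.2) := by
  ext n
  rw [coeff_mul, coeff_egf, sum_div]
  refine sum_congr rfl fun ⟨i, j⟩ hij => ?_
  obtain rfl : i + j = n := mem_antidiagonal.mp hij
  have hfac : ((i + j).choose i : K) * i.factorial * j.factorial = (i + j).factorial := by
    rw [Nat.choose_symm_add]; exact_mod_cast Nat.add_choose_mul_factorial_mul_factorial i j
  have hchoose : ((i + j).choose i : K) ≠ 0 :=
    Nat.cast_ne_zero.mpr (Nat.choose_pos (Nat.le_add_right i j)).ne'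
  simp only [coeff_egf]
  rw [← hfac]
  field_simp

end ExponentialGeneratingFunction

lemma degFallingFactorial_succ (lam x : ℝ) (n : ℕ) :
    degFallingFactorial lam x (n + 1) = degFallingFactorial lam x n * (x - n * lam) :=
  prod_range_succ _ _

lemma degFallingFactorial_add (lam x y : ℝ) (n : ℕ) :
    degFallingFactorial lam (x + y) n =
      ∑ ij ∈ antidiagonal n, (n.choose ij.1 : ℝ) *
        (degFallingFactorial lam x ij.1 * degFallingFactorial lam y ij.2) := by
  induction n with
  | zero => simp [degFallingFactorial]
  | succ n ih =>
    rw [degFallingFactorial_succ, ih, sum_mul, sum_antidiagonal_choose_succ_mul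
      (fun i j => degFallingFactorial lam x i * degFallingFactorial lam y j), ← sum_add_distrib]
    refine sum_congr rfl fun ⟨i, j⟩ hij => ?_
    obtain rfl : i + j = n := mem_antidiagonal.mp hij
    simp only [degFallingFactorial_succ, ← Nat.choose_symm_add, Nat.cast_add]
    ring

lemma degExpSeries_eq_egf (lam x : ℝ) : degExpSeries lam x = egf (degFallingFactorial lam x) := rfl

lemma degExpSeries_mul (lam x y : ℝ) :
    degExpSeries lam x * degExpSeries lam y = degExpSeries lam (x + y) := by
  rw [degExpSeries_eq_egf, degExpSeries_eq_egf, egf_mul, degExpSeries_eq_egf]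
  congr 1
  funext n
  exact (degFallingFactorial_add lam x y n).symm

lemma degBernoulliSeries_eq_egf (lam x : ℝ) :
    degBernoulliSeries lam x = egf (degBernoulli lam x) := by
  ext n
  rw [coeff_egf, degBernoulli, mul_div_cancel_left₀ _ (by positivity)]

lemma X_mul_degExpSubOneDivT (lam : ℝ) :
    X * degExpSubOneDivT lam = degExpSeries lam 1 - 1 := by
  ext n
  cases n with
  | zero => simp [degExpSeries, degFallingFactorial]
  | succ m => simp [coeff_succ_X_mul, degExpSubOneDivT, degExpSeries, coeff_one]

noncomputable def mersenneSeries (lam : ℝ) : PowerSeries ℝ :=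
  egf fun m => dimorphicMersenne lam (m + 1) / (m + 1)

lemma X_mul_mersenneSeries (lam : ℝ) :
    X * mersenneSeries lam = degExpSeries lam 2 - degExpSeries lam 1 := by
  ext n
  cases n with
  | zero => simp [degExpSeries, degFallingFactorial]
  | succ m =>
    simp only [coeff_succ_X_mul, mersenneSeries, coeff_egf, map_sub, degExpSeries, coeff_mk,
      dimorphicMersenne, Nat.factorial_succ, Nat.cast_mul, Nat.cast_succ]
    field_simp

lemma mersenneSeries_eq_degExpSubOneDivT_mul (lam : ℝ) :
    mersenneSeries lam = degExpSubOneDivT lam * degExpSeries lam 1 := by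
  refine mul_left_cancel₀ X_ne_zero ?_
  rw [X_mul_mersenneSeries, ← mul_assoc, X_mul_degExpSubOneDivT, sub_mul, one_mul,
    degExpSeries_mul, one_add_one_eq_two]

lemma degBernoulliSeries_mul_mersenneSeries (lam x : ℝ) :
    degBernoulliSeries lam x * mersenneSeries lam = degExpSeries lam (x + 1) := by
  have hunit : (degExpSubOneDivT lam)⁻¹ * degExpSubOneDivT lam = 1 :=
    PowerSeries.inv_mul_cancel _ (by simp [degExpSubOneDivT, degFallingFactorial])
  rw [mersenneSeries_eq_degExpSubOneDivT_mul, degBernoulliSeries, mul_mul_mul_comm, hunit,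
    one_mul, degExpSeries_mul]

/-- `(x+1)_{n,λ} = ∑_{l=0}^{n} C(n,l) β_{l,λ}(x) M_{n-l+1,λ}/(n-l+1)`. -/
theorem degFallingFactorial_succ_eq_sum (lam : ℝ) (n : ℕ) (x : ℝ) :
    degFallingFactorial lam (x + 1) n =
      ∑ l ∈ Finset.range (n + 1),
        (n.choose l : ℝ) * degBernoulli lam x l *
          (dimorphicMersenne lam (n - l + 1) / (n - l + 1 : ℝ)) := by
  have h := degBernoulliSeries_mul_mersenneSeries lam x
  rw [degBernoulliSeries_eq_egf, mersenneSeries, egf_mul, degExpSeries_eq_egf] at h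
  rw [← congrFun (egf_injective h) n, Nat.sum_antidiagonal_eq_sum_range_succ_mk]
  refine sum_congr rfl fun l hl => ?_
  rw [Nat.cast_sub (Nat.lt_succ_iff.mp (mem_range.mp hl)), mul_assoc]
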